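/- Let M be a subspace of a real Banach space E. Then M^# = ⋃ M^#_{ρ_F}, the union being taken over all finite sets F ⊆ B_{E*}; that is, an f ∈ E* satisfies ‖f‖ = ‖f|_M‖ if and only if there is a finite F ⊆ B_{E*} such that χ_{ρ_{F'}}^E(f) = χ_{ρ_{F'}}^M(f|_M) < ∞ for every finite F' ⊆ B_{E*} with ρ_F ≤ ρ_{F'} pointwise. -/

import Mathlib

open scoped ENNReal

set_option synthInstance.maxHeartbeats 400000
set_option maxHeartbeats 1000000

noncomputable section

/-- `χ_ρ(g) = sup { |g v| : ρ v ≤ 1 } ∈ [0,∞]`. -/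
def chi {V : Type*} [AddCommGroup V] [Module ℝ V] [TopologicalSpace V]
    (ρ : V → ℝ) (g : V →L[ℝ] ℝ) : ℝ≥0∞ :=
  ⨆ v ∈ {v : V | ρ v ≤ 1}, ENNReal.ofReal |g v|

/-- The seminorm `ρ_F(x) = max_{f ∈ F} |f x|` of the weak topology, for a finite
set `F` of functionals. -/
def rhoF {E : Type*} [NormedAddCommGroup E] [NormedSpace ℝ E]
    (F : Finset (E →L[ℝ] ℝ)) (x : E) : ℝ :=
  ⨆ f ∈ F, |f x|

section Aux

variable {E : Type*} [NormedAddCommGroup E] [NormedSpace ℝ E]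

lemma rhoF_nonneg (F : Finset (E →L[ℝ] ℝ)) (x : E) : 0 ≤ rhoF F x :=
  Real.iSup_nonneg fun f => Real.iSup_nonneg fun _ => abs_nonneg _

lemma abs_le_rhoF {F : Finset (E →L[ℝ] ℝ)} {φ : E →L[ℝ] ℝ} (hφ : φ ∈ F) (x : E) :
    |φ x| ≤ rhoF F x := by
  have hbdd : BddAbove (Set.range fun f : E →L[ℝ] ℝ => ⨆ _ : f ∈ F, |f x|) := by
    refine ⟨∑ ψ ∈ F, |ψ x|, ?_⟩
    rintro _ ⟨f, rfl⟩
    show (⨆ _ : f ∈ F, |f x|) ≤ ∑ ψ ∈ F, |ψ x|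
    by_cases hf : f ∈ F
    · rw [ciSup_pos (f := fun _ : f ∈ F => |f x|) hf]
      exact Finset.single_le_sum (fun ψ _ => abs_nonneg (ψ x)) hf
    · haveI : IsEmpty (f ∈ F) := ⟨hf⟩
      rw [Real.iSup_of_isEmpty]
      exact Finset.sum_nonneg fun ψ _ => abs_nonneg (ψ x)
  exact le_ciSup_of_le hbdd φ (ciSup_pos (f := fun _ : φ ∈ F => |φ x|) hφ).ge

lemma rhoF_mono {F F' : Finset (E →L[ℝ] ℝ)} (h : F ⊆ F') (x : E) :
    rhoF F x ≤ rhoF F' x :=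
  Real.iSup_le (fun f => Real.iSup_le (fun hf => abs_le_rhoF (h hf) x) (rhoF_nonneg F' x))
    (rhoF_nonneg F' x)

lemma rhoF_le_norm {F : Finset (E →L[ℝ] ℝ)} (h : ∀ φ ∈ F, ‖φ‖ ≤ 1) (x : E) :
    rhoF F x ≤ ‖x‖ := by
  refine Real.iSup_le (fun f => Real.iSup_le (fun hf => ?_) (norm_nonneg x)) (norm_nonneg x)
  calc |f x| = ‖f x‖ := (Real.norm_eq_abs _).symm
    _ ≤ ‖f‖ * ‖x‖ := f.le_opNorm x
    _ ≤ 1 * ‖x‖ := by gcongr; exact h f hf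
    _ = ‖x‖ := one_mul _

lemma chi_le_ofReal {V : Type*} [AddCommGroup V] [Module ℝ V] [TopologicalSpace V]
    (ρ : V → ℝ) (g : V →L[ℝ] ℝ) {C : ℝ} (h : ∀ v, ρ v ≤ 1 → |g v| ≤ C) :
    chi ρ g ≤ ENNReal.ofReal C :=
  iSup₂_le fun v hv => ENNReal.ofReal_le_ofReal (h v hv)

lemma ofReal_norm_le_chi {V : Type*} [NormedAddCommGroup V] [NormedSpace ℝ V]
    (ρ : V → ℝ) (h : ∀ v : V, ‖v‖ ≤ 1 → ρ v ≤ 1) (g : V →L[ℝ] ℝ) :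
    ENNReal.ofReal ‖g‖ ≤ chi ρ g := by
  by_cases htop : chi ρ g = ⊤
  · simp [htop]
  have hmem : ∀ v : V, ‖v‖ ≤ 1 → ENNReal.ofReal |g v| ≤ chi ρ g := fun v hv =>
    le_iSup₂_of_le v (h v hv) le_rfl
  have hnorm : ‖g‖ ≤ (chi ρ g).toReal := by
    refine g.opNorm_le_bound ENNReal.toReal_nonneg fun x => ?_
    by_cases hx : x = 0
    · simp [hx]
    have hxn : 0 < ‖x‖ := norm_pos_iff.mpr hx
    have h1 : ‖(‖x‖⁻¹ • x)‖ ≤ 1 := by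
      rw [norm_smul, norm_inv, norm_norm, inv_mul_cancel₀ hxn.ne']
    have h2 : |g (‖x‖⁻¹ • x)| ≤ (chi ρ g).toReal :=
      (ENNReal.ofReal_le_iff_le_toReal htop).mp (hmem _ h1)
    have h3 : g (‖x‖⁻¹ • x) = ‖x‖⁻¹ * g x := by
      rw [map_smul]; rfl
    rw [h3, abs_mul, abs_inv, abs_norm] at h2
    rw [Real.norm_eq_abs]
    calc |g x| = ‖x‖ * (‖x‖⁻¹ * |g x|) := by field_simp
      _ ≤ ‖x‖ * (chi ρ g).toReal := by gcongr
      _ = (chi ρ g).toReal * ‖x‖ := mul_comm _ _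
  calc ENNReal.ofReal ‖g‖ ≤ ENNReal.ofReal (chi ρ g).toReal := ENNReal.ofReal_le_ofReal hnorm
    _ = chi ρ g := ENNReal.ofReal_toReal htop

lemma chi_restrict_le (ρ : E → ℝ) (M : Submodule ℝ E) (f : E →L[ℝ] ℝ) :
    chi (fun y : M => ρ (y : E)) (f.comp M.subtypeL) ≤ chi ρ f :=
  iSup₂_le fun y hy => le_iSup₂_of_le (y : E) hy le_rfl

end Aux

theorem statement12 {E : Type*} [NormedAddCommGroup E] [NormedSpace ℝ E] [CompleteSpace E]
    (M : Submodule ℝ E) (f : E →L[ℝ] ℝ) :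
    ‖f‖ = ‖f.comp M.subtypeL‖ ↔
      ∃ F : Finset (E →L[ℝ] ℝ), (∀ φ ∈ F, ‖φ‖ ≤ 1) ∧
        ∀ F' : Finset (E →L[ℝ] ℝ), (∀ φ ∈ F', ‖φ‖ ≤ 1) → (∀ x, rhoF F x ≤ rhoF F' x) →
          chi (rhoF F') f = chi (fun y : M => rhoF F' (y : E)) (f.comp M.subtypeL) ∧
          chi (rhoF F') f < ⊤ := by
  set g0 := f.comp M.subtypeL with hg0def
  have hg0f : ∀ y : M, g0 y = f (y : E) := fun y => rfl
  have hg0le : ‖g0‖ ≤ ‖f‖ := by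
    refine ContinuousLinearMap.opNorm_le_bound _ (norm_nonneg f) fun y => ?_
    calc ‖g0 y‖ = ‖f (y : E)‖ := rfl
      _ ≤ ‖f‖ * ‖(y : E)‖ := f.le_opNorm _
      _ = ‖f‖ * ‖y‖ := rfl
  constructor
  · intro hEq
    by_cases hf0 : f = 0
    · refine ⟨∅, by simp, fun F' hF'1 hF'2 => ?_⟩
      have : g0 = 0 := by rw [hg0def, hf0]; ext y; simp
      simp [chi, hf0, this]
    · have hfpos : 0 < ‖f‖ := norm_pos_iff.mpr hf0
      set g : E →L[ℝ] ℝ := ‖f‖⁻¹ • f with hgdef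
      have hgnorm : ‖g‖ = 1 := by
        have h1 : ‖‖f‖⁻¹ • f‖ = ‖f‖⁻¹ * ‖f‖ := by
          rw [norm_smul ‖f‖⁻¹ f, norm_inv, norm_norm]
        rw [hgdef, h1, inv_mul_cancel₀ hfpos.ne']
      refine ⟨{g}, by simp [hgnorm], fun F' hF'1 hF'2 => ?_⟩
      -- any x with rhoF F' x ≤ 1 satisfies |f x| ≤ ‖f‖
      have hkey : ∀ x : E, rhoF F' x ≤ 1 → |f x| ≤ ‖f‖ := by
        intro x hx
        have h1 : |g x| ≤ 1 := le_trans (le_trans (abs_le_rhoF (Finset.mem_singleton_self g) x)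
          (hF'2 x)) hx
        have h2 : g x = ‖f‖⁻¹ * f x := rfl
        rw [h2, abs_mul, abs_inv, abs_norm] at h1
        calc |f x| = ‖f‖ * (‖f‖⁻¹ * |f x|) := by field_simp
          _ ≤ ‖f‖ * 1 := by gcongr
          _ = ‖f‖ := mul_one _
      have hEle : chi (rhoF F') f ≤ ENNReal.ofReal ‖f‖ := chi_le_ofReal _ _ hkey
      have hEge : ENNReal.ofReal ‖f‖ ≤ chi (rhoF F') f :=
        ofReal_norm_le_chi _ (fun v hv => le_trans (rhoF_le_norm hF'1 v) hv) f
      have hE : chi (rhoF F') f = ENNReal.ofReal ‖f‖ := le_antisymm hEle hEge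
      have hMge : ENNReal.ofReal ‖f‖ ≤ chi (fun y : M => rhoF F' (y : E)) g0 := by
        rw [hEq]
        refine ofReal_norm_le_chi _ (fun y hy => ?_) g0
        exact le_trans (rhoF_le_norm hF'1 (y : E)) hy
      have hMle : chi (fun y : M => rhoF F' (y : E)) g0 ≤ chi (rhoF F') f :=
        chi_restrict_le _ M f
      refine ⟨le_antisymm (hE.trans_le hMge) hMle, ?_⟩
      rw [hE]; exact ENNReal.ofReal_lt_top
  · rintro ⟨F, hF1, hmain⟩
    classical
    obtain ⟨hFeq, hFlt⟩ := hmain F hF1 (fun x => le_refl _)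
    by_cases hg00 : g0 = 0
    · have hM0 : chi (fun y : M => rhoF F (y : E)) g0 = 0 := by simp [chi, hg00]
      have hE0 : chi (rhoF F) f = 0 := by rw [hFeq, hM0]
      have : ENNReal.ofReal ‖f‖ ≤ 0 := hE0 ▸ ofReal_norm_le_chi _
        (fun v hv => le_trans (rhoF_le_norm hF1 v) hv) f
      have hf0 : ‖f‖ ≤ 0 :=
        ENNReal.ofReal_eq_zero.mp (le_antisymm this zero_le)
      rw [le_antisymm hf0 (norm_nonneg f), hg00]
      exact ContinuousLinearMap.opNorm_zero.symm
    · have hg0pos : 0 < ‖g0‖ :=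
        lt_of_le_of_ne (norm_nonneg g0) fun hc =>
          hg00 (ContinuousLinearMap.opNorm_zero_iff g0 |>.mp hc.symm)
      obtain ⟨h, hext, hnorm⟩ := exists_extension_norm_eq M g0
      set g : E →L[ℝ] ℝ := ‖g0‖⁻¹ • h with hgdef
      have hgnorm : ‖g‖ = 1 := by
        have h1 : ‖‖g0‖⁻¹ • h‖ = ‖g0‖⁻¹ * ‖h‖ := by
          rw [norm_smul ‖g0‖⁻¹ h, norm_inv, Real.norm_of_nonneg (norm_nonneg g0)]
        rw [hgdef, h1, hnorm, inv_mul_cancel₀ hg0pos.ne']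
      set F' : Finset (E →L[ℝ] ℝ) := insert g F with hF'def
      have hF'1 : ∀ φ ∈ F', ‖φ‖ ≤ 1 := by
        intro φ hφ
        rcases Finset.mem_insert.mp hφ with h1 | h2
        · rw [h1, hgnorm]
        · exact hF1 φ h2
      obtain ⟨hF'eq, _⟩ := hmain F' hF'1 (fun x => rhoF_mono (Finset.subset_insert g F) x)
      have hEge : ENNReal.ofReal ‖f‖ ≤ chi (rhoF F') f :=
        ofReal_norm_le_chi _ (fun v hv => le_trans (rhoF_le_norm hF'1 v) hv) f
      have hMle : chi (fun y : M => rhoF F' (y : E)) g0 ≤ ENNReal.ofReal ‖g0‖ := by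
        refine chi_le_ofReal _ _ fun y hy => ?_
        have h1 : |g (y : E)| ≤ 1 :=
          le_trans (abs_le_rhoF (Finset.mem_insert_self g F) (y : E)) hy
        have h2 : g (y : E) = ‖g0‖⁻¹ * g0 y := by
          rw [hgdef]
          show ‖g0‖⁻¹ * h (y : E) = ‖g0‖⁻¹ * g0 y
          rw [hext y]
        rw [h2, abs_mul, abs_inv, abs_of_nonneg (norm_nonneg g0)] at h1
        calc |g0 y| = ‖g0‖ * (‖g0‖⁻¹ * |g0 y|) := by field_simp
          _ ≤ ‖g0‖ * 1 := by gcongr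
          _ = ‖g0‖ := mul_one _
      have : ENNReal.ofReal ‖f‖ ≤ ENNReal.ofReal ‖g0‖ :=
        hEge.trans (hF'eq ▸ hMle)
      have hfle : ‖f‖ ≤ ‖g0‖ :=
        (ENNReal.ofReal_le_ofReal_iff (norm_nonneg g0)).mp this
      exact le_antisymm hfle hg0le
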